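/- Let X be a pre-ordered vector space with positive wedge X₊, let W be the τ_ru-closure of X₊, and let A = W ∩ (−W). Then the image [W] of W under the quotient map X → X/A is an Archimedean cone in X/A: [W] is a wedge with [W] ∩ (−[W]) = {0}, and whenever n·ξ ≤ η for all n ∈ ℕ for some ξ ∈ X/A and η ∈ [W] (with respect to the pre-order induced by [W]), then ξ ≤ 0. Moreover, if X₊ is majorizing in X then [W] is majorizing in X/A. -/

import Mathlib

/-!
Translations and nonnegative dilations preserve ru-convergence, so by closure induction the
ru-closure `W` of the wedge `P` is again a wedge. It is Archimedean by a second closure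
induction: for `p ∈ P` the points `(k + 1)⁻¹ • (p - (k + 1) • x) ∈ W` ru-converge to `-x` with
regulator `p`, and an ru-limit `u` of `uₖ` is dominated by `u_N + r` for the regulator `r`,
which is absorbed by shifting along `P`. Quotienting by the lineality space `A = W ∩ -W`
makes the wedge pointed and, since `W + A = W`, reflects membership in `[W]` back to `W`, so
the Archimedean property descends to `X ⧸ A`.
-/

/-- A wedge in a real vector space: closed under addition and nonnegative scaling. -/
def IsWedge {V : Type*} [AddCommGroup V] [Module ℝ V] (W : Set V) : Prop :=
  (∀ x ∈ W, ∀ y ∈ W, x + y ∈ W) ∧ ∀ t : ℝ, 0 ≤ t → ∀ x ∈ W, t • x ∈ W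

/-- Relative uniform convergence of the sequence `x` to `l`, with respect to the
positive wedge `P`: for some regulator `w ∈ P`, for every `m ≥ 1` eventually
`±(x k − l) ≤ (1/m)·w` (inequalities expressed via membership in `P`). -/
def RuConv {V : Type*} [AddCommGroup V] [Module ℝ V] (P : Set V) (x : ℕ → V) (l : V) : Prop :=
  ∃ w ∈ P, ∀ m : ℕ, 1 ≤ m → ∃ N : ℕ, ∀ k ≥ N,
    (1 / (m : ℝ)) • w - (x k - l) ∈ P ∧ (1 / (m : ℝ)) • w + (x k - l) ∈ P

/-- A set `S` is ru-closed if it contains the limits of all ru-convergent sequences in `S`. -/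
def RuClosed {V : Type*} [AddCommGroup V] [Module ℝ V] (P : Set V) (S : Set V) : Prop :=
  ∀ (x : ℕ → V) (l : V), (∀ n, x n ∈ S) → RuConv P x l → l ∈ S

/-- `S′_ru`: the set of limits of ru-convergent sequences in `S`. -/
def ruDeriv {V : Type*} [AddCommGroup V] [Module ℝ V] (P : Set V) (S : Set V) : Set V :=
  {l | ∃ x : ℕ → V, (∀ n, x n ∈ S) ∧ RuConv P x l}

/-- The τ_ru-closure of `S`: the smallest ru-closed set containing `S`. -/
def ruClosure {V : Type*} [AddCommGroup V] [Module ℝ V] (P : Set V) (S : Set V) : Set V :=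
  ⋂₀ {C : Set V | S ⊆ C ∧ RuClosed P C}

/-- In the pre-order of `C`: `n • x ≤ y` for all `n` with `0 ≤ y` forces `x ≤ 0`. -/
def IsArchimedeanWedge {V : Type*} [AddCommGroup V] [Module ℝ V] (C : Set V) : Prop :=
  ∀ x y : V, y ∈ C → (∀ n : ℕ, y - n • x ∈ C) → -x ∈ C

def IsMajorizing {V : Type*} [AddCommGroup V] (D : Set V) : Prop :=
  ∀ x : V, ∃ a ∈ D, ∃ b ∈ D, x = a - b

theorem IsMajorizing.mono {V : Type*} [AddCommGroup V] {D E : Set V} (hD : IsMajorizing D)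
    (hDE : D ⊆ E) : IsMajorizing E :=
  fun x => by
    obtain ⟨a, ha, b, hb, rfl⟩ := hD x
    exact ⟨a, hDE ha, b, hDE hb, rfl⟩

section Wedge

variable {V Y : Type*} [AddCommGroup V] [Module ℝ V] [AddCommGroup Y] [Module ℝ Y]

theorem IsWedge.image {W : Set V} (hW : IsWedge W) (f : V →ₗ[ℝ] Y) : IsWedge (f '' W) := by
  refine ⟨?_, ?_⟩
  · rintro _ ⟨a, ha, rfl⟩ _ ⟨b, hb, rfl⟩
    exact ⟨a + b, hW.1 a ha b hb, map_add f a b⟩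
  · rintro t ht _ ⟨a, ha, rfl⟩
    exact ⟨t • a, hW.2 t ht a ha, map_smul f t a⟩

theorem IsMajorizing.image {D : Set V} (hD : IsMajorizing D) {f : V →ₗ[ℝ] Y}
    (hf : Function.Surjective f) : IsMajorizing (f '' D) := fun y => by
  obtain ⟨x, rfl⟩ := hf y
  obtain ⟨a, ha, b, hb, rfl⟩ := hD x
  exact ⟨f a, ⟨a, ha, rfl⟩, f b, ⟨b, hb, rfl⟩, map_sub f a b⟩

end Wedge

section RuConv

variable {V : Type*} [AddCommGroup V] [Module ℝ V] {P : Set V} {x : ℕ → V} {l : V}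

theorem RuConv.const_add (h : RuConv P x l) (c : V) :
    RuConv P (fun k => c + x k) (c + l) := by
  simpa only [RuConv, add_sub_add_left_eq_sub] using h

theorem RuConv.add_const (h : RuConv P x l) (c : V) :
    RuConv P (fun k => x k + c) (l + c) := by
  simpa only [RuConv, add_sub_add_right_eq_sub] using h

theorem RuConv.smul (h : RuConv P x l) (hP : IsWedge P) {t : ℝ} (ht : 0 ≤ t) :
    RuConv P (fun k => t • x k) (t • l) := by
  obtain ⟨w, hw, hconv⟩ := h
  refine ⟨t • w, hP.2 t ht w hw, fun m hm => ?_⟩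
  obtain ⟨N, hN⟩ := hconv m hm
  refine ⟨N, fun k hk => ⟨?_, ?_⟩⟩
  · convert hP.2 t ht _ (hN k hk).1 using 1
    module
  · convert hP.2 t ht _ (hN k hk).2 using 1
    module

theorem RuConv.exists_add_sub_mem (h : RuConv P x l) : ∃ r ∈ P, ∃ N, x N + r - l ∈ P := by
  obtain ⟨w, hw, hconv⟩ := h
  obtain ⟨N, hN⟩ := hconv 1 le_rfl
  refine ⟨w, hw, N, ?_⟩
  convert (hN N le_rfl).2 using 1
  simp only [Nat.cast_one, div_one, one_smul]
  abel

theorem ruConv_add_inv_succ_smul (hP : IsWedge P) {p : V} (hp : p ∈ P) (l : V) :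
    RuConv P (fun k : ℕ => l + ((k : ℝ) + 1)⁻¹ • p) l := by
  refine ⟨p, hp, fun m hm => ⟨m, fun k hk => ?_⟩⟩
  have hinv : ((k : ℝ) + 1)⁻¹ ≤ 1 / (m : ℝ) := by
    rw [one_div]
    exact inv_anti₀ (by exact_mod_cast hm) (by exact_mod_cast hk.trans (Nat.le_succ k))
  simp only [add_sub_cancel_left, ← sub_smul, ← add_smul]
  exact ⟨hP.2 _ (sub_nonneg.mpr hinv) p hp, hP.2 _ (by positivity) p hp⟩

end RuConv

section RuClosure

variable {V : Type*} [AddCommGroup V] [Module ℝ V] {P : Set V}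

theorem subset_ruClosure (P S : Set V) : S ⊆ ruClosure P S := fun _ hx _ hC => hC.1 hx

theorem ruClosed_ruClosure (P S : Set V) : RuClosed P (ruClosure P S) :=
  fun x l hx hconv C hC => hC.2 x l (fun n => hx n C hC) hconv

theorem ruClosure_subset {S C : Set V} (hSC : S ⊆ C) (hC : RuClosed P C) :
    ruClosure P S ⊆ C :=
  fun _ hx => hx C ⟨hSC, hC⟩

theorem ruClosure_empty (P : Set V) : ruClosure P ∅ = ∅ :=
  Set.subset_empty_iff.mp <| ruClosure_subset (Set.empty_subset _) fun _ _ hx _ => (hx 0).elim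

theorem mapsTo_ruClosure {S T : Set V} {f : V → V} (hf : Set.MapsTo f S (ruClosure P T))
    (hconv : ∀ x l, RuConv P x l → RuConv P (f ∘ x) (f l)) :
    Set.MapsTo f (ruClosure P S) (ruClosure P T) :=
  ruClosure_subset hf fun x l hx h => ruClosed_ruClosure P T (f ∘ x) (f l) hx (hconv x l h)

theorem IsWedge.isWedge_ruClosure (hP : IsWedge P) : IsWedge (ruClosure P P) := by
  have hPW : ∀ p ∈ P, ∀ y ∈ ruClosure P P, p + y ∈ ruClosure P P := fun p hp =>
    mapsTo_ruClosure (fun q hq => subset_ruClosure P P (hP.1 p hp q hq))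
      fun x l h => h.const_add p
  refine ⟨fun x hx y hy => ?_, fun t ht x hx => ?_⟩
  · exact mapsTo_ruClosure (f := (· + y)) (fun p hp => hPW p hp y hy)
      (fun x l h => h.add_const y) hx
  · exact mapsTo_ruClosure (fun p hp => subset_ruClosure P P (hP.2 t ht p hp))
      (fun x l h => h.smul hP ht) hx

theorem IsWedge.neg_mem_ruClosure_of_sub_nsmul_mem (hP : IsWedge P) {p x : V} (hp : p ∈ P)
    (h : ∀ n : ℕ, p - n • x ∈ ruClosure P P) : -x ∈ ruClosure P P := by
  refine ruClosed_ruClosure P P _ (-x) (fun k => ?_) (ruConv_add_inv_succ_smul hP hp (-x))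
  have hk : ((k : ℝ) + 1)⁻¹ • (p - (k + 1) • x) = -x + ((k : ℝ) + 1)⁻¹ • p := by
    rw [← Nat.cast_smul_eq_nsmul ℝ, smul_sub, smul_smul, Nat.cast_succ,
      inv_mul_cancel₀ (by positivity), one_smul]
    abel
  rw [← hk]
  exact hP.isWedge_ruClosure.2 _ (by positivity) _ (h (k + 1))

theorem IsWedge.neg_mem_ruClosure_of_add_sub_nsmul_mem (hP : IsWedge P) {u v x : V}
    (hu : u ∈ ruClosure P P) (hv : v ∈ P) (h : ∀ n : ℕ, u + v - n • x ∈ ruClosure P P) :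
    -x ∈ ruClosure P P := by
  suffices ruClosure P P ⊆ {u | ∀ v ∈ P, ∀ x : V,
      (∀ n : ℕ, u + v - n • x ∈ ruClosure P P) → -x ∈ ruClosure P P} from this hu v hv x h
  refine ruClosure_subset (fun p hp v hv x h =>
    hP.neg_mem_ruClosure_of_sub_nsmul_mem (hP.1 p hp v hv) h) ?_
  rintro y l hy hconv v hv x h
  obtain ⟨r, hr, N, hN⟩ := hconv.exists_add_sub_mem
  refine hy N (v + r) (hP.1 v hv r hr) x fun n => ?_
  have hsplit : y N + (v + r) - n • x = (y N + r - l) + (l + v - n • x) := by abel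
  rw [hsplit]
  exact hP.isWedge_ruClosure.1 _ (subset_ruClosure P P hN) _ (h n)

theorem IsWedge.isArchimedeanWedge_ruClosure (hP : IsWedge P) :
    IsArchimedeanWedge (ruClosure P P) := by
  intro x w hw h
  obtain ⟨v, hv⟩ : P.Nonempty := by
    rw [Set.nonempty_iff_ne_empty]
    rintro rfl
    rwa [ruClosure_empty] at hw
  refine hP.neg_mem_ruClosure_of_add_sub_nsmul_mem hw hv fun n => ?_
  rw [add_sub_right_comm]
  exact hP.isWedge_ruClosure.1 _ (h n) _ (subset_ruClosure P P hv)

end RuClosure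

section Quotient

variable {X : Type*} [AddCommGroup X] [Module ℝ X] {W : Set X} {A : Submodule ℝ X}

theorem mkQ_mem_image_iff (hW : IsWedge W) (hA : (A : Set X) = W ∩ -W) {z : X} :
    A.mkQ z ∈ A.mkQ '' W ↔ z ∈ W := by
  refine ⟨fun ⟨w, hw, hwz⟩ => ?_, fun hz => ⟨z, hz, rfl⟩⟩
  have hA' : w - z ∈ W ∩ -W := by
    rw [← hA]
    exact (Submodule.Quotient.eq A).mp hwz
  have hzw : z - w ∈ W := by simpa only [Set.mem_neg, neg_sub] using hA'.2
  simpa only [add_sub_cancel] using hW.1 w hw (z - w) hzw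

theorem image_mkQ_inter_neg (hW : IsWedge W) (hA : (A : Set X) = W ∩ -W) :
    A.mkQ '' W ∩ -(A.mkQ '' W) = {0} := by
  refine Set.Subset.antisymm ?_ ?_
  · rintro _ ⟨⟨a, ha, rfl⟩, hneg⟩
    rw [Set.mem_neg, ← map_neg, mkQ_mem_image_iff hW hA] at hneg
    have haA : a ∈ (A : Set X) := by
      rw [hA]
      exact ⟨ha, Set.mem_neg.mpr hneg⟩
    exact (Submodule.Quotient.mk_eq_zero A).mpr haA
  · have h0 : (0 : X) ∈ W := by
      have h0A : (0 : X) ∈ (A : Set X) := A.zero_mem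
      rw [hA] at h0A
      exact h0A.1
    rintro _ rfl
    exact ⟨⟨0, h0, map_zero _⟩, ⟨0, h0, by rw [map_zero, neg_zero]⟩⟩

theorem IsArchimedeanWedge.image_mkQ (hC : IsArchimedeanWedge W) (hW : IsWedge W)
    (hA : (A : Set X) = W ∩ -W) : IsArchimedeanWedge (A.mkQ '' W) := by
  rintro ξ _ ⟨w, hw, rfl⟩ h
  obtain ⟨x, rfl⟩ := A.mkQ_surjective ξ
  refine ⟨-x, hC x w hw fun n => ?_, map_neg _ x⟩
  rw [← mkQ_mem_image_iff hW hA, map_sub, map_nsmul]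
  exact h n

end Quotient

/-- Let `X` be a pre-ordered vector space with positive wedge
`P`, let `W` be the τ_ru-closure of `P` and `A = W ∩ (−W)` (a subspace).  Then
the image `[W]` of `W` in `X/A` is an Archimedean cone: it is a wedge,
`[W] ∩ (−[W]) = {0}`, and `n·ξ ≤ η ∈ [W]` for all `n` implies `ξ ≤ 0`.
Moreover `[W]` is majorizing in `X/A` whenever `P` is majorizing in `X`. -/
theorem quotient_closure_archimedean_cone {X : Type*} [AddCommGroup X] [Module ℝ X]
    (P : Set X) (hP : IsWedge P)
    (A : Submodule ℝ X) (hA : (A : Set X) = ruClosure P P ∩ (-(ruClosure P P))) :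
    IsWedge (A.mkQ '' ruClosure P P) ∧
    (A.mkQ '' ruClosure P P) ∩ (-(A.mkQ '' ruClosure P P)) = {0} ∧
    (∀ ξ η : X ⧸ A, η ∈ A.mkQ '' ruClosure P P →
      (∀ n : ℕ, η - n • ξ ∈ A.mkQ '' ruClosure P P) → -ξ ∈ A.mkQ '' ruClosure P P) ∧
    ((∀ x : X, ∃ a ∈ P, ∃ b ∈ P, x = a - b) →
      ∀ ξ : X ⧸ A, ∃ a ∈ A.mkQ '' ruClosure P P, ∃ b ∈ A.mkQ '' ruClosure P P, ξ = a - b) := by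
  have hW : IsWedge (ruClosure P P) := hP.isWedge_ruClosure
  refine ⟨hW.image A.mkQ, image_mkQ_inter_neg hW hA,
    hP.isArchimedeanWedge_ruClosure.image_mkQ hW hA, fun hmaj => ?_⟩
  exact ((show IsMajorizing P from hmaj).mono (subset_ruClosure P P)).image A.mkQ_surjective
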